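/- Consider the mean-payoff parity game with three vertices a, m, r; priorities π(a) = 1, π(m) = π(r) = 0; edges (m, a) with cost 1, (a, m) with cost 0, (m, r) with cost −1, and (r, m) with cost 0; where the vertex m is owned by Con (the vertices a and r each have a unique outgoing edge, so their ownership is irrelevant). Then Con has a winning strategy from m, but no positional strategy for Con is winning from m. -/

import Mathlib

/-- A mean-payoff parity game on a vertex type `V`: a directed graph in which
every vertex has at least one outgoing edge, a partition of the vertices into
those owned by player Dis (`disOwns v`) and those owned by player Con,
a priority function and an integer cost function on edges. -/
structure MPPGame (V : Type) where
  edge : V → V → Prop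
  disOwns : V → Prop
  pri : V → ℕ
  cost : V → V → ℤ
  exists_succ : ∀ v, ∃ u, edge v u

/-- `A`, `B`, `C` partition `W`. -/
def Partition3 {V : Type} (W A B C : Set V) : Prop :=
  A ∪ B ∪ C = W ∧ Disjoint A B ∧ Disjoint A C ∧ Disjoint B C

/-- Lexicographic order on finite sequences, in which a proper prefix is
smaller than any of its proper extensions. -/
def seqLt {M : Type} (lt : M → M → Prop) : List M → List M → Prop :=
  List.Lex lt

/-- The `p`-truncation of a sequence `⟨m_{d-1}, m_{d-3}, …, m_ℓ⟩` (indexed by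
odd numbers from `d-1` downwards): keep only the components `m_i` with `i ≥ p`. -/
def trunc {M : Type} (d p : ℕ) (s : List M) : List M :=
  s.take ((d + 1 - p) / 2)

/-- The order on finite binary strings: `0s < ε`, `ε < 1s`, and
`bs < bs'` iff `s < s'`. -/
def binLt : List Bool → List Bool → Prop
  | [], [] => False
  | false :: _, [] => True
  | true :: _, [] => False
  | [], false :: _ => False
  | [], true :: _ => True
  | a :: s, b :: t => (a = false ∧ b = true) ∨ (a = b ∧ binLt s t)

/-- Membership in `S_{n,d}`: sequences `⟨m_{d-1}, …, m_ℓ⟩` of binary strings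
with `ℓ` odd, `1 ≤ ℓ ≤ d+1` (equivalently `2·len ≤ d`) and total length at
most `⌈log₂ n⌉`. -/
def inSnd (n d : ℕ) (s : List (List Bool)) : Prop :=
  2 * s.length ≤ d ∧ (s.map List.length).sum ≤ Nat.clog 2 n

namespace MPPGame

variable {V : Type}

/-- An infinite play: each consecutive pair is an edge. -/
def Play (G : MPPGame V) (p : ℕ → V) : Prop :=
  ∀ i, G.edge (p i) (p (i + 1))

/-- An infinite play that stays in the subgame induced by `W`. -/
def PlayIn (G : MPPGame V) (W : Set V) (p : ℕ → V) : Prop :=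
  (∀ i, p i ∈ W) ∧ ∀ i, G.edge (p i) (p (i + 1))

/-- The mean payoff of a play: the limit superior of the averages of the
partial sums of the edge costs. -/
noncomputable def meanPayoff (G : MPPGame V) (p : ℕ → V) : ℝ :=
  Filter.limsup
    (fun N => (∑ i ∈ Finset.range N, (G.cost (p i) (p (i + 1)) : ℝ)) / (N : ℝ))
    Filter.atTop

/-- Priority `k` occurs infinitely often along the play `p`. -/
def InfOften (G : MPPGame V) (p : ℕ → V) (k : ℕ) : Prop :=
  ∀ N, ∃ i, N ≤ i ∧ G.pri (p i) = k

/-- A play is winning for Con if the highest priority occurring infinitely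
often is odd and the mean payoff is negative. -/
def ConWinsPlay (G : MPPGame V) (p : ℕ → V) : Prop :=
  (∃ k, Odd k ∧ G.InfOften p k ∧ ∀ j, G.InfOften p j → j ≤ k) ∧
    G.meanPayoff p < 0

/-- A play is winning for Dis iff it is not winning for Con. -/
def DisWinsPlay (G : MPPGame V) (p : ℕ → V) : Prop :=
  ¬ G.ConWinsPlay p

/-- A (history-dependent) strategy for Dis: given the list of previously
visited vertices and the current vertex (owned by Dis), it picks a successor
along an edge. -/
def DisStrategy (G : MPPGame V) (σ : List V → V → V) : Prop :=
  ∀ h v, G.disOwns v → G.edge v (σ h v)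

/-- A (history-dependent) strategy for Con. -/
def ConStrategy (G : MPPGame V) (σ : List V → V → V) : Prop :=
  ∀ h v, ¬ G.disOwns v → G.edge v (σ h v)

/-- A play is consistent with a strategy `σ` of Dis. -/
def ConsistentDis (G : MPPGame V) (σ : List V → V → V) (p : ℕ → V) : Prop :=
  ∀ i, G.disOwns (p i) → p (i + 1) = σ ((List.range i).map p) (p i)

/-- A play is consistent with a strategy `σ` of Con. -/
def ConsistentCon (G : MPPGame V) (σ : List V → V → V) (p : ℕ → V) : Prop :=
  ∀ i, ¬ G.disOwns (p i) → p (i + 1) = σ ((List.range i).map p) (p i)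

/-- A positional strategy for Dis. -/
def PosDisStrategy (G : MPPGame V) (σ : V → V) : Prop :=
  ∀ v, G.disOwns v → G.edge v (σ v)

/-- A positional strategy for Con. -/
def PosConStrategy (G : MPPGame V) (σ : V → V) : Prop :=
  ∀ v, ¬ G.disOwns v → G.edge v (σ v)

/-- A play is consistent with a positional strategy `σ` of Dis. -/
def ConsistentDisPos (G : MPPGame V) (σ : V → V) (p : ℕ → V) : Prop :=
  ∀ i, G.disOwns (p i) → p (i + 1) = σ (p i)

/-- A play is consistent with a positional strategy `σ` of Con. -/
def ConsistentConPos (G : MPPGame V) (σ : V → V) (p : ℕ → V) : Prop :=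
  ∀ i, ¬ G.disOwns (p i) → p (i + 1) = σ (p i)

/-- The strategy `σ` of Dis is winning for Dis from `v`. -/
def DisWinsFrom (G : MPPGame V) (σ : List V → V → V) (v : V) : Prop :=
  ∀ p, G.Play p → p 0 = v → G.ConsistentDis σ p → G.DisWinsPlay p

/-- The strategy `σ` of Con is winning for Con from `v`. -/
def ConWinsFrom (G : MPPGame V) (σ : List V → V → V) (v : V) : Prop :=
  ∀ p, G.Play p → p 0 = v → G.ConsistentCon σ p → G.ConWinsPlay p

/-- The positional strategy `σ` of Dis is winning for Dis from `v`. -/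
def DisWinsFromPos (G : MPPGame V) (σ : V → V) (v : V) : Prop :=
  ∀ p, G.Play p → p 0 = v → G.ConsistentDisPos σ p → G.DisWinsPlay p

/-- The positional strategy `σ` of Con is winning for Con from `v`. -/
def ConWinsFromPos (G : MPPGame V) (σ : V → V) (v : V) : Prop :=
  ∀ p, G.Play p → p 0 = v → G.ConsistentConPos σ p → G.ConWinsPlay p

/-- `W` is a trap for Con: every Con vertex of `W` has all its outgoing edges
into `W`, and every Dis vertex of `W` has at least one outgoing edge into `W`. -/
def TrapForCon (G : MPPGame V) (W : Set V) : Prop :=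
  ∀ v ∈ W, (¬ G.disOwns v → ∀ u, G.edge v u → u ∈ W) ∧
    (G.disOwns v → ∃ u ∈ W, G.edge v u)

/-- `W` is a trap for Dis. -/
def TrapForDis (G : MPPGame V) (W : Set V) : Prop :=
  ∀ v ∈ W, (G.disOwns v → ∀ u, G.edge v u → u ∈ W) ∧
    (¬ G.disOwns v → ∃ u ∈ W, G.edge v u)

/-- `R` is a trap for Con inside the subgame induced by `W` (only edges
within `W` count for Con). -/
def TrapForConIn (G : MPPGame V) (W R : Set V) : Prop :=
  ∀ v ∈ R, (¬ G.disOwns v → ∀ u ∈ W, G.edge v u → u ∈ R) ∧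
    (G.disOwns v → ∃ u ∈ R, G.edge v u)

/-- `R` is a trap for Dis inside the subgame induced by `W`. -/
def TrapForDisIn (G : MPPGame V) (W R : Set V) : Prop :=
  ∀ v ∈ R, (G.disOwns v → ∀ u ∈ W, G.edge v u → u ∈ R) ∧
    (¬ G.disOwns v → ∃ u ∈ R, G.edge v u)

/-- `W` induces a subgame: it is nonempty and every vertex of `W` has an
outgoing edge within `W`. -/
def IsSubgame (G : MPPGame V) (W : Set V) : Prop :=
  W.Nonempty ∧ ∀ v ∈ W, ∃ u ∈ W, G.edge v u

/-- `τ` is a positional reachability strategy for Dis from `T` to `B` in the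
subgame `W`: it is a legal positional strategy within `W`, and every
consistent play in `W` starting in `T` reaches `B`. -/
def DisReach (G : MPPGame V) (W T B : Set V) (τ : V → V) : Prop :=
  (∀ v ∈ W, G.disOwns v → G.edge v (τ v) ∧ τ v ∈ W) ∧
    ∀ p, G.PlayIn W p → p 0 ∈ T → G.ConsistentDisPos τ p → ∃ i, p i ∈ B

/-- `τ` is a positional reachability strategy for Con from `T` to `B` in `W`. -/
def ConReach (G : MPPGame V) (W T B : Set V) (τ : V → V) : Prop :=
  (∀ v ∈ W, ¬ G.disOwns v → G.edge v (τ v) ∧ τ v ∈ W) ∧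
    ∀ p, G.PlayIn W p → p 0 ∈ T → G.ConsistentConPos τ p → ∃ i, p i ∈ B

/-- `σ` is a positional strategy for Dis that is mean-payoff winning for Dis on
`R`: every consistent play in `R` has limsup average cost `≥ 0`. -/
def DisMPWin (G : MPPGame V) (R : Set V) (σ : V → V) : Prop :=
  (∀ v ∈ R, G.disOwns v → G.edge v (σ v) ∧ σ v ∈ R) ∧
    ∀ p, G.PlayIn R p → G.ConsistentDisPos σ p → 0 ≤ G.meanPayoff p

/-- `σ` is a positional strategy for Con that is mean-payoff winning for Con on
`R`: every consistent play in `R` has limsup average cost `< 0`. -/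
def ConMPWin (G : MPPGame V) (R : Set V) (σ : V → V) : Prop :=
  (∀ v ∈ R, ¬ G.disOwns v → G.edge v (σ v) ∧ σ v ∈ R) ∧
    ∀ p, G.PlayIn R p → G.ConsistentConPos σ p → G.meanPayoff p < 0

/-- `DisDecomp G b W` : the subgame `W`, whose highest priority is `b`, has a
`b`-decomposition for Dis.  (The disjunctions in the textbook definition are
split into separate constructors, and "`X` is empty or recursively has a
decomposition" is encoded as `X.Nonempty → DisDecomp G _ X`.) -/
inductive DisDecomp (G : MPPGame V) : ℕ → Set V → Prop where
  | even (b b' : ℕ) (W R T B : Set V) (τ : V → V)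
      (hb : Even b) (hsub : G.IsSubgame W)
      (hpart : Partition3 W R T B)
      (hB : B = {v | v ∈ W ∧ G.pri v = b}) (hBne : B.Nonempty)
      (htop : ∀ v ∈ W, G.pri v ≤ b)
      (hreach : G.DisReach W T B τ)
      (hb' : R.Nonempty → b' < b)
      (hR : R.Nonempty → DisDecomp G b' R) :
      DisDecomp G b W
  | oddRec (b b' b'' : ℕ) (W U T R : Set V) (τ : V → V)
      (hb : Odd b) (hsub : G.IsSubgame W)
      (hpart : Partition3 W U T R)
      (htop : ∀ v ∈ W, G.pri v ≤ b) (htop' : ∃ v ∈ W, G.pri v = b)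
      (hRne : R.Nonempty) (htrap : G.TrapForConIn W R)
      (hb1 : b' < b) (hR : DisDecomp G b' R)
      (hreach : G.DisReach W T R τ)
      (hb2 : U.Nonempty → b'' ≤ b)
      (hU : U.Nonempty → DisDecomp G b'' U) :
      DisDecomp G b W
  | oddMP (b b'' : ℕ) (W U T R : Set V) (τ σ : V → V)
      (hb : Odd b) (hsub : G.IsSubgame W)
      (hpart : Partition3 W U T R)
      (htop : ∀ v ∈ W, G.pri v ≤ b) (htop' : ∃ v ∈ W, G.pri v = b)
      (hRne : R.Nonempty) (htrap : G.TrapForConIn W R)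
      (hsig : G.DisMPWin R σ)
      (hreach : G.DisReach W T R τ)
      (hb2 : U.Nonempty → b'' ≤ b)
      (hU : U.Nonempty → DisDecomp G b'' U) :
      DisDecomp G b W

/-- `ConDecomp G b W` : the subgame `W`, whose highest priority is `b`, has a
`b`-decomposition for Con.  ("`X` is empty or recursively has a decomposition"
is encoded as `X.Nonempty → ConDecomp G _ X`.) -/
inductive ConDecomp (G : MPPGame V) : ℕ → Set V → Prop where
  | odd (b b' : ℕ) (W R T B : Set V) (τ lam : V → V)
      (hb : Odd b) (hsub : G.IsSubgame W)
      (hpart : Partition3 W R T B)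
      (hB : B = {v | v ∈ W ∧ G.pri v = b}) (hBne : B.Nonempty)
      (htop : ∀ v ∈ W, G.pri v ≤ b)
      (hreach : G.ConReach W T B τ)
      (hb' : R.Nonempty → b' < b)
      (hR : R.Nonempty → ConDecomp G b' R)
      (hlam : G.ConMPWin W lam) :
      ConDecomp G b W
  | even (b b' b'' : ℕ) (W U T R : Set V) (τ : V → V)
      (hb : Even b) (hsub : G.IsSubgame W)
      (hpart : Partition3 W U T R)
      (htop : ∀ v ∈ W, G.pri v ≤ b) (htop' : ∃ v ∈ W, G.pri v = b)
      (hRne : R.Nonempty) (htrap : G.TrapForDisIn W R)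
      (hb1 : b' < b) (hR : ConDecomp G b' R)
      (hreach : G.ConReach W T R τ)
      (hb2 : U.Nonempty → b'' ≤ b)
      (hU : U.Nonempty → ConDecomp G b'' U) :
      ConDecomp G b W

/-- The maximum absolute value of the cost of an edge of the subgame induced
by `W` (and `0` if there is none). -/
noncomputable def maxCostOn (G : MPPGame V) (W : Set V) : ℕ :=
  sSup {n : ℕ | ∃ v ∈ W, ∃ u ∈ W, G.edge v u ∧ n = (G.cost v u).natAbs}

/-- The edge `(v, u)` is progressive in the progress labelling `(μ, φ)`
(with priorities bounded by the even number `d`, over an ordered set with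
strict order `lt`). -/
def Progressive {M : Type} (G : MPPGame V) (d : ℕ) (lt : M → M → Prop)
    (μ : V → List M) (φ : V → WithTop ℤ) (v u : V) : Prop :=
  seqLt lt (trunc d (G.pri v) (μ u)) (μ v) ∨
  (trunc d (G.pri v) (μ u) = μ v ∧ Even (G.pri v) ∧ φ v = ⊤) ∨
  (μ u = μ v ∧ φ v ≠ ⊤ ∧ φ u ≤ φ v + (G.cost v u : WithTop ℤ))

/-- `(μ, φ)` is a progress labelling on the subgame induced by `W`:
`μ v` represents the sequence `⟨m_{d-1}, m_{d-3}, …, m_ℓ⟩` (so that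
`d + 1 = 2·(μ v).length + ℓ` with `ℓ` odd and `ℓ ≥ π(v)`);
if `φ v = ∞` then `ℓ` is the least odd integer `≥ π(v)`; and if `φ v ≠ ∞`
then `0 ≤ φ v ≤ n·C`, where `n` is the number of vertices of the subgame and
`C` the maximum absolute value of an edge cost of the subgame. -/
def IsProgressLabellingOn {M : Type} (G : MPPGame V) (W : Set V) (d : ℕ)
    (μ : V → List M) (φ : V → WithTop ℤ) : Prop :=
  ∀ v ∈ W,
    (∃ l, Odd l ∧ G.pri v ≤ l ∧ d + 1 = 2 * (μ v).length + l) ∧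
    (φ v = ⊤ → d + 1 ≤ 2 * (μ v).length + G.pri v + 1) ∧
    (φ v ≠ ⊤ → 0 ≤ φ v ∧
      φ v ≤ (((W.ncard * G.maxCostOn W : ℕ) : ℤ) : WithTop ℤ))

/-- `(μ, φ)` is a progress measure on the subgame induced by `W`: a progress
labelling such that every Dis vertex has a progressive outgoing edge in the
subgame, and every outgoing edge of a Con vertex in the subgame is progressive. -/
def IsProgressMeasureOn {M : Type} (G : MPPGame V) (W : Set V) (d : ℕ)
    (lt : M → M → Prop) (μ : V → List M) (φ : V → WithTop ℤ) : Prop :=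
  G.IsProgressLabellingOn W d μ φ ∧
  (∀ v ∈ W, G.disOwns v → ∃ u ∈ W, G.edge v u ∧ G.Progressive d lt μ φ v u) ∧
  (∀ v ∈ W, ¬ G.disOwns v → ∀ u ∈ W, G.edge v u → G.Progressive d lt μ φ v u)

end MPPGame

/-- The three-vertex example game: vertices `a = 0`, `m = 1`, `r = 2`;
priorities `π a = 1`, `π m = π r = 0`; edges `(m, a)` with cost `1`,
`(a, m)` with cost `0`, `(m, r)` with cost `-1`, `(r, m)` with cost `0`;
the middle vertex `m` is owned by Con (the other two vertices have unique
outgoing edges, so their ownership is irrelevant; here they are owned by Dis). -/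
def exampleGame : MPPGame (Fin 3) where
  edge v u := (v = 0 ∧ u = 1) ∨ (v = 1 ∧ u = 0) ∨ (v = 1 ∧ u = 2) ∨ (v = 2 ∧ u = 1)
  disOwns v := v ≠ 1
  pri v := if v = 0 then 1 else 0
  cost v u := if v = 1 ∧ u = 0 then 1 else if v = 1 ∧ u = 2 then -1 else 0
  exists_succ := by decide

/-! Con must see the odd priority of `a` infinitely often while keeping the average cost
negative. A positional strategy at `m` either always moves to `a`, giving the play `m a m a …`
of mean payoff `1/2`, or always to `r`, giving a play that never visits `a`. With a counter,
Con moves to `a` on every third visit to `m` only: the resulting play `(m a m r m r)^ω` has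
cost `-1` per period, hence mean payoff `-1/6`, and visits `a` infinitely often. -/

open Filter Topology Finset

theorem Function.Periodic.abs_le_sum_range {f : ℕ → ℝ} {n : ℕ} (hf : Function.Periodic f n)
    (hn : n ≠ 0) (N : ℕ) : |f N| ≤ ∑ i ∈ range n, |f i| := by
  have hmod : f (N % n) = f N := by
    simpa [Nat.mod_add_div' N n] using (hf.nat_mul (N / n) (N % n)).symm
  rw [← hmod]
  exact single_le_sum (fun i _ => abs_nonneg (f i))
    (mem_range.2 (Nat.mod_lt N (Nat.pos_of_ne_zero hn)))

theorem Function.Periodic.tendsto_sum_range_div {a : ℕ → ℝ} {n : ℕ}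
    (ha : Function.Periodic a n) (hn : n ≠ 0) :
    Tendsto (fun N : ℕ => (∑ i ∈ range N, a i) / N) atTop
      (𝓝 ((∑ i ∈ range n, a i) / n)) := by
  set c := (∑ i ∈ range n, a i) / n
  set f : ℕ → ℝ := fun N => ∑ i ∈ range N, a i - N * c
  have hf : Function.Periodic f n := by
    intro N
    have hshift : ∑ i ∈ range N, a (n + i) = ∑ i ∈ range N, a i :=
      sum_congr rfl fun i _ => by rw [add_comm]; exact ha i
    have hnc : (n : ℝ) * c = ∑ i ∈ range n, a i := mul_div_cancel₀ _ (Nat.cast_ne_zero.2 hn)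
    simp only [f, add_comm N n, sum_range_add, hshift, Nat.cast_add]
    linarith
  have hdev : Tendsto (fun N : ℕ => f N / N) atTop (𝓝 0) := by
    refine squeeze_zero_norm (fun N => ?_)
      (tendsto_const_div_atTop_nhds_zero_nat (∑ i ∈ range n, |f i|))
    rw [norm_div, Real.norm_eq_abs, Real.norm_natCast]
    exact div_le_div_of_nonneg_right (hf.abs_le_sum_range hn N) (Nat.cast_nonneg N)
  refine (add_zero c ▸ hdev.const_add c).congr' ?_
  filter_upwards [eventually_ne_atTop 0] with N hN
  simp only [f]
  field_simp
  ring

theorem MPPGame.meanPayoff_of_periodic {V : Type} (G : MPPGame V) {p : ℕ → V} {n : ℕ}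
    (hp : Function.Periodic p n) (hn : n ≠ 0) :
    G.meanPayoff p = (∑ i ∈ range n, (G.cost (p i) (p (i + 1)) : ℝ)) / n :=
  (Function.Periodic.tendsto_sum_range_div (a := fun i => (G.cost (p i) (p (i + 1)) : ℝ))
    (fun i => by simp only [hp i, add_right_comm i n 1, hp (i + 1)]) hn).limsup_eq

namespace ExampleGame

lemma eq_one_of_edge {v u : Fin 3} (h : exampleGame.edge v u) (hv : v ≠ 1) : u = 1 := by
  revert v u; simp only [exampleGame]; decide

lemma edge_symm {v u : Fin 3} (h : exampleGame.edge v u) : exampleGame.edge u v := by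
  revert v u; simp only [exampleGame]; decide

lemma ne_one_of_edge_one {u : Fin 3} (h : exampleGame.edge 1 u) : u ≠ 1 := by
  revert u; simp only [exampleGame]; decide

lemma eq_zero_or_eq_two_of_edge_one {u : Fin 3} (h : exampleGame.edge 1 u) : u = 0 ∨ u = 2 := by
  revert u; simp only [exampleGame]; decide

lemma pri_le_one (v : Fin 3) : exampleGame.pri v ≤ 1 := by
  revert v; decide

lemma not_disOwns_one : ¬ exampleGame.disOwns 1 := fun h => h rfl

def alternatingPlay (u : Fin 3) (i : ℕ) : Fin 3 := if i % 2 = 0 then 1 else u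

lemma alternatingPlay_periodic (u : Fin 3) : Function.Periodic (alternatingPlay u) 2 := by
  intro i
  simp only [alternatingPlay, Nat.add_mod_right]

lemma play_alternatingPlay {u : Fin 3} (hu : exampleGame.edge 1 u) :
    exampleGame.Play (alternatingPlay u) := by
  intro i
  rcases Nat.mod_two_eq_zero_or_one i with hi | hi
  · simpa [alternatingPlay, hi, Nat.succ_mod_two_eq_one_iff.2 hi] using hu
  · simpa [alternatingPlay, hi, Nat.succ_mod_two_eq_zero_iff.2 hi] using edge_symm hu

lemma consistentConPos_alternatingPlay {σ : Fin 3 → Fin 3} (hσ : exampleGame.edge 1 (σ 1)) :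
    exampleGame.ConsistentConPos σ (alternatingPlay (σ 1)) := by
  intro i hi
  have hpi : alternatingPlay (σ 1) i = 1 := not_not.1 hi
  have heven : i % 2 = 0 := by
    by_contra hodd
    exact ne_one_of_edge_one hσ (by simpa [alternatingPlay, hodd] using hpi)
  simp [alternatingPlay, heven, Nat.succ_mod_two_eq_one_iff.2 heven]

lemma not_conWinsPlay_alternatingPlay {u : Fin 3} (hu : exampleGame.edge 1 u) :
    ¬ exampleGame.ConWinsPlay (alternatingPlay u) := by
  rcases eq_zero_or_eq_two_of_edge_one hu with rfl | rfl
  · rintro ⟨-, hneg⟩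
    rw [MPPGame.meanPayoff_of_periodic _ (alternatingPlay_periodic 0) two_ne_zero] at hneg
    norm_num [sum_range_succ, alternatingPlay, exampleGame] at hneg
  · rintro ⟨⟨k, hk, hinf, -⟩, -⟩
    obtain ⟨i, -, hi⟩ := hinf 0
    have hpri : exampleGame.pri (alternatingPlay 2 i) = 0 := by
      unfold alternatingPlay; split <;> rfl
    rw [hpri] at hi
    exact Nat.not_odd_zero (hi ▸ hk)

-- The history before position `i` has length `i`, and `m` occupies the even positions,
-- so this moves to `a` on every third visit to `m`.
def conStrategy (h : List (Fin 3)) (_ : Fin 3) : Fin 3 := if h.length % 6 = 0 then 0 else 2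

def periodSixPlay (i : ℕ) : Fin 3 := if i % 2 = 0 then 1 else if i % 6 = 1 then 0 else 2

lemma conStrategy_legal : exampleGame.ConStrategy conStrategy := by
  intro h v hv
  obtain rfl : v = 1 := not_not.1 hv
  unfold conStrategy
  split <;> simp only [exampleGame] <;> decide

lemma eq_periodSixPlay_of_consistentCon {p : ℕ → Fin 3} (hp : exampleGame.Play p)
    (h0 : p 0 = 1) (hc : exampleGame.ConsistentCon conStrategy p) : p = periodSixPlay := by
  funext i
  induction i with
  | zero => exact h0
  | succ i ih =>
    rcases Nat.mod_two_eq_zero_or_one i with hi | hi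
    · have hpi : p i = 1 := by rw [ih, periodSixPlay, if_pos hi]
      rw [hc i (hpi ▸ not_disOwns_one)]
      simp only [conStrategy, List.length_map, List.length_range, periodSixPlay,
        if_neg (show (i + 1) % 2 ≠ 0 by omega)]
      by_cases h6 : i % 6 = 0
      · rw [if_pos h6, if_pos (by omega)]
      · rw [if_neg h6, if_neg (by omega)]
    · have hpi : p i ≠ 1 := by
        rw [ih, periodSixPlay, if_neg (by omega)]
        split <;> decide
      rw [eq_one_of_edge (hp i) hpi, periodSixPlay, if_pos (by omega)]

lemma conWinsPlay_periodSixPlay : exampleGame.ConWinsPlay periodSixPlay := by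
  have hper : Function.Periodic periodSixPlay 6 := by
    intro i
    simp only [periodSixPlay, show (i + 6) % 2 = i % 2 by omega, Nat.add_mod_right]
  refine ⟨⟨1, odd_one, fun N => ⟨6 * N + 1, by omega, ?_⟩, fun j hj => ?_⟩, ?_⟩
  · simp [periodSixPlay, exampleGame, show (6 * N + 1) % 2 = 1 by omega,
      show (6 * N + 1) % 6 = 1 by omega]
  · obtain ⟨i, -, rfl⟩ := hj 0
    exact pri_le_one _
  · have hsum :
        ∑ i ∈ range 6, exampleGame.cost (periodSixPlay i) (periodSixPlay (i + 1)) = -1 := by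
      decide
    rw [MPPGame.meanPayoff_of_periodic _ hper (by norm_num), ← Int.cast_sum, hsum]
    norm_num

end ExampleGame

open ExampleGame

/-- In the example game, Con has a winning strategy from the
middle vertex `m = 1`, but no positional strategy for Con is winning from it. -/
theorem example_game_con_wins_but_not_positionally :
    (∃ σ : List (Fin 3) → Fin 3 → Fin 3,
      exampleGame.ConStrategy σ ∧ exampleGame.ConWinsFrom σ 1) ∧
    ¬ ∃ σ : Fin 3 → Fin 3,
      exampleGame.PosConStrategy σ ∧ exampleGame.ConWinsFromPos σ 1 := by
  refine ⟨⟨conStrategy, conStrategy_legal, fun p hp h0 hc => ?_⟩, ?_⟩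
  · rw [eq_periodSixPlay_of_consistentCon hp h0 hc]
    exact conWinsPlay_periodSixPlay
  · rintro ⟨σ, hσ, hwin⟩
    have hedge : exampleGame.edge 1 (σ 1) := hσ 1 not_disOwns_one
    exact not_conWinsPlay_alternatingPlay hedge
      (hwin _ (play_alternatingPlay hedge) rfl (consistentConPos_alternatingPlay hedge))
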